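/- arXiv:2407.20031 — 3 statements merged into one kernel-verified Lean document; each statement's English description precedes it below -/
import Mathlib

section
/- Let G = (V,E) be a finite acyclic directed graph and let ΔE ⊆ E with |ΔE| = m, and set G' = (V, E \ ΔE). Then for all vertices u and v such that v is reachable from u in G', there is a shortest directed path in G' from u to v that can be written as a concatenation P_1, f_1, P_2, f_2, …, f_j, P_{j+1} with j ≤ m, where each f_i is a single edge of G', and each P_i is a (possibly single-vertex) directed path from some vertex u_i to some vertex v_i such that P_i is a shortest directed path from u_i to v_i in G and no shortest directed path from u_i to v_i in G uses an edge from ΔE. -/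
/-- A directed path of length `d` from `x` to `y` in the digraph with edge set `E`,
given by its sequence of vertices `w 0, w 1, …, w d`. -/
def IsDPath {V : Type*} (E : Set (V × V)) (w : ℕ → V) (d : ℕ) (x y : V) : Prop :=
  w 0 = x ∧ w d = y ∧ ∀ i < d, (w i, w (i + 1)) ∈ E

/-- The directed path `w 0, …, w d` uses an edge from the set `S`. -/
def DPathUsesFrom {V : Type*} (w : ℕ → V) (d : ℕ) (S : Set (V × V)) : Prop :=
  ∃ i < d, (w i, w (i + 1)) ∈ S

/-- A shortest directed path: a directed path of minimum length among all
directed paths from `x` to `y`. -/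
def IsShortestDPath {V : Type*} (E : Set (V × V)) (w : ℕ → V) (d : ℕ) (x y : V) : Prop :=
  IsDPath E w d x y ∧ ∀ (w' : ℕ → V) (d' : ℕ), IsDPath E w' d' x y → d ≤ d'

/- ### Auxiliary machinery -/

def glueW {V : Type*} (w : ℕ → V) (d : ℕ) (w' : ℕ → V) : ℕ → V :=
  fun t => if t < d then w t else w' (t - d)

lemma glue_path {V : Type*} {E : Set (V × V)} {w w' : ℕ → V} {d d' : ℕ} {x y z : V}
    (h : IsDPath E w d x y) (h' : IsDPath E w' d' y z) :
    IsDPath E (glueW w d w') (d + d') x z := by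
  obtain ⟨h0, hd, he⟩ := h
  obtain ⟨h0', hd', he'⟩ := h'
  refine ⟨?_, ?_, ?_⟩
  · by_cases hd0 : 0 < d
    · simp [glueW, hd0, h0]
    · have hdz : d = 0 := by omega
      subst hdz
      simp only [glueW, Nat.lt_irrefl, if_false, Nat.sub_zero]
      rw [h0', ← hd, h0]
  · simp [glueW, hd']
  · intro i hi
    by_cases h1 : i + 1 < d
    · have h2 : i < d := by omega
      simpa [glueW, h1, h2] using he i h2
    · by_cases h2 : i < d
      · have hid : i + 1 = d := by omega
        have e1 : glueW w d w' i = w i := by simp [glueW, h2]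
        have e2 : glueW w d w' (i + 1) = w' 0 := by simp [glueW, hid]
        rw [e1, e2, h0', ← hd, ← hid]
        exact he i h2
      · have e1 : glueW w d w' i = w' (i - d) := by simp [glueW, h2]
        have e2 : glueW w d w' (i + 1) = w' (i - d + 1) := by
          have : ¬ (i + 1 < d) := by omega
          simp [glueW, this]
          congr 1
          omega
        rw [e1, e2]
        exact he' (i - d) (by omega)

lemma subpath {V : Type*} {E : Set (V × V)} {w : ℕ → V} {d : ℕ} {x y : V}
    (h : IsDPath E w d x y) {s t : ℕ} (hst : s ≤ t) (htd : t ≤ d) :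
    IsDPath E (fun r => w (s + r)) (t - s) (w s) (w t) := by
  obtain ⟨h0, hd, he⟩ := h
  refine ⟨by simp, ?_, ?_⟩
  · have : s + (t - s) = t := by omega
    simp [this]
  · intro i hi
    have h1 : s + i < d := by omega
    have h2 : s + (i + 1) = s + i + 1 := by omega
    simpa [h2] using he (s + i) h1

def Reach {V : Type*} (E : Set (V × V)) (x y : V) : Prop :=
  ∃ w d, IsDPath E w d x y

lemma Reach.trans {V : Type*} {E : Set (V × V)} {x y z : V}
    (h : Reach E x y) (h' : Reach E y z) : Reach E x z := by
  obtain ⟨w, d, hw⟩ := h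
  obtain ⟨w', d', hw'⟩ := h'
  exact ⟨_, _, glue_path hw hw'⟩

def Good {V : Type*} (E ΔE : Set (V × V)) (x y : V) : Prop :=
  ∀ q dq, IsShortestDPath E q dq x y → ¬ DPathUsesFrom q dq ΔE

lemma good_refl {V : Type*} (E ΔE : Set (V × V)) (x : V) : Good E ΔE x x := by
  intro q dq hq
  have h0 : IsDPath E (fun _ => x) 0 x x := ⟨rfl, rfl, by omega⟩
  have hdq : dq ≤ 0 := hq.2 _ 0 h0
  rintro ⟨i, hi, -⟩
  omega

lemma exists_shortest {V : Type*} {E' : Set (V × V)} {x y : V}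
    (h : ∃ w d, IsDPath E' w d x y) : ∃ w d, IsShortestDPath E' w d x y := by
  classical
  obtain ⟨w0, d0, h0⟩ := h
  have hP : ∃ dd, ∃ w, IsDPath E' w dd x y := ⟨d0, w0, h0⟩
  obtain ⟨w1, hw1⟩ := Nat.find_spec hP
  exact ⟨w1, Nat.find hP, hw1, fun w' d' h' => Nat.find_min' hP ⟨w', h'⟩⟩

lemma sub_shortest {V : Type*} {E' : Set (V × V)} {w : ℕ → V} {d : ℕ} {u v : V}
    (h : IsShortestDPath E' w d u v) {s t : ℕ} (hst : s ≤ t) (htd : t ≤ d) :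
    IsShortestDPath E' (fun r => w (s + r)) (t - s) (w s) (w t) := by
  refine ⟨subpath h.1 hst htd, ?_⟩
  intro q dq hq
  by_contra hlt
  push_neg at hlt
  have pre := subpath h.1 (Nat.zero_le s) (le_trans hst htd)
  have suf := subpath h.1 htd (le_refl d)
  rw [h.1.1] at pre
  rw [h.1.2.1] at suf
  have big := glue_path pre (glue_path hq suf)
  have := h.2 _ _ big
  omega

open Classical in
noncomputable def nxt {V : Type*} (E ΔE : Set (V × V)) (w : ℕ → V) (d c : ℕ) : ℕ :=
  Nat.findGreatest (fun k => c ≤ k ∧ Good E ΔE (w c) (w k)) d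

open Classical in
lemma nxt_spec {V : Type*} (E ΔE : Set (V × V)) (w : ℕ → V) {d c : ℕ} (hc : c ≤ d) :
    c ≤ nxt E ΔE w d c ∧ nxt E ΔE w d c ≤ d ∧ Good E ΔE (w c) (w (nxt E ΔE w d c)) := by
  unfold nxt
  have h := Nat.findGreatest_spec (P := fun k => c ≤ k ∧ Good E ΔE (w c) (w k)) (m := c) hc
    ⟨le_refl c, good_refl E ΔE (w c)⟩
  exact ⟨h.1, Nat.findGreatest_le d, h.2⟩

open Classical in
lemma nxt_max {V : Type*} (E ΔE : Set (V × V)) (w : ℕ → V) {d c k : ℕ}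
    (h1 : nxt E ΔE w d c < k) (h2 : k ≤ d) :
    ¬ (c ≤ k ∧ Good E ΔE (w c) (w k)) := by
  unfold nxt at h1
  exact Nat.findGreatest_is_greatest h1 h2

noncomputable def seqA {V : Type*} (E ΔE : Set (V × V)) (w : ℕ → V) (d : ℕ) : ℕ → ℕ
  | 0 => 0
  | i + 1 => nxt E ΔE w d (seqA E ΔE w d i) + 1

/-- Let `(V, E)` be a finite acyclic digraph, `ΔE ⊆ E` with `|ΔE| = m`,
and consider `G' = (V, E \ ΔE)`. For all vertices `u, v` with `v` reachable from `u`
in `G'`, there is a shortest directed path `w 0, …, w d` from `u` to `v` in `G'`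
that is a concatenation `P_1, f_1, P_2, …, f_j, P_{j+1}` with `j ≤ m`, where each `f_i`
is a single edge of `G'` (the edge of the path between consecutive segments), and each
segment `P_i` (spanning positions `a i` to `b i`) is a shortest directed path in `(V, E)`
between its endpoints such that no shortest directed path in `(V, E)` between these
endpoints uses an edge from `ΔE`. -/
theorem stmt3 {V : Type*} [Fintype V] (E : Set (V × V))
    (hacyc : ¬ ∃ (x : V) (w : ℕ → V) (d : ℕ), 0 < d ∧ IsDPath E w d x x)
    (ΔE : Finset (V × V)) (hΔ : ↑ΔE ⊆ E) (m : ℕ) (hm : ΔE.card = m) (u v : V)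
    (hreach : ∃ (w : ℕ → V) (d : ℕ), IsDPath (E \ ↑ΔE) w d u v) :
    ∃ (w : ℕ → V) (d : ℕ), IsShortestDPath (E \ ↑ΔE) w d u v ∧
      ∃ j ≤ m, ∃ a b : ℕ → ℕ,
        a 0 = 0 ∧ b j = d ∧
        (∀ i ≤ j, a i ≤ b i) ∧
        (∀ i < j, a (i + 1) = b i + 1) ∧
        (∀ i ≤ j, IsShortestDPath E (fun t => w (a i + t)) (b i - a i) (w (a i)) (w (b i))) ∧
        (∀ i ≤ j, ∀ (q : ℕ → V) (dq : ℕ),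
          IsShortestDPath E q dq (w (a i)) (w (b i)) → ¬ DPathUsesFrom q dq ↑ΔE) := by
  classical
  obtain ⟨w, d, hwd⟩ := exists_shortest hreach
  -- no cycle helper
  have nocyc : ∀ p q : V, (p, q) ∈ E → ¬ Reach E q p := by
    rintro p q hpq ⟨wq, dq, hwq⟩
    apply hacyc
    have edge : IsDPath E (fun t => if t = 0 then p else q) 1 p q :=
      ⟨by simp, by simp, fun i hi => by
        have : i = 0 := by omega
        subst this
        simpa using hpq⟩
    exact ⟨q, glueW wq dq (fun t => if t = 0 then p else q), dq + 1, by omega,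
      glue_path hwq edge⟩
  -- the path w is also an E-path
  have hwE : IsDPath E w d u v :=
    ⟨hwd.1.1, hwd.1.2.1, fun i hi => (hwd.1.2.2 i hi).1⟩
  set A : ℕ → ℕ := seqA E (↑ΔE) w d with hA
  set B : ℕ → ℕ := fun i => nxt E (↑ΔE) w d (A i) with hB
  have hstep : ∀ i, A (i + 1) = B i + 1 := fun i => rfl
  have hA0 : A 0 = 0 := rfl
  -- invariant
  have Inv : ∀ i, (∀ k < i, B k ≠ d) → A i ≤ d ∧ i ≤ A i := by
    intro i
    induction i with
    | zero => intro _; simp [hA0]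
    | succ n ih =>
      intro hk
      have h1 := ih (fun k hk' => hk k (by omega))
      have h2 := nxt_spec E (↑ΔE) w h1.1
      have h3 : B n ≠ d := hk n (by omega)
      rw [hstep n]
      constructor
      · have : B n ≤ d := h2.2.1
        omega
      · have : A n ≤ B n := h2.1
        omega
  have hex : ∃ i, B i = d := by
    by_contra hcon
    push_neg at hcon
    have := Inv (d + 1) (fun k _ => hcon k)
    omega
  set j := Nat.find hex with hj
  have hBj : B j = d := Nat.find_spec hex
  have hBlt' : ∀ i < j, B i ≠ d := fun i hi => Nat.find_min hex hi
  have hAle : ∀ i ≤ j, A i ≤ d ∧ i ≤ A i := by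
    intro i hi
    exact Inv i (fun k hk => hBlt' k (by omega))
  have hspec : ∀ i ≤ j, A i ≤ B i ∧ B i ≤ d ∧ Good E (↑ΔE) (w (A i)) (w (B i)) := by
    intro i hi
    exact nxt_spec E (↑ΔE) w (hAle i hi).1
  have hBlt : ∀ i < j, B i < d := by
    intro i hi
    have := (hspec i (le_of_lt hi)).2.1
    have := hBlt' i hi
    omega
  -- monotonicity of A up to j
  have hmono : ∀ i i', i ≤ i' → i' ≤ j → A i ≤ A i' := by
    intro i i' hii' hi'j
    induction i' with
    | zero =>
      have : i = 0 := by omega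
      subst this
      exact le_refl _
    | succ n ih =>
      rcases Nat.lt_or_ge i (n + 1) with h | h
      · have h1 : A i ≤ A n := ih (by omega) (by omega)
        have h2 : A n ≤ B n := (hspec n (by omega)).1
        rw [hstep n]
        omega
      · have : i = n + 1 := by omega
        subst this
        exact le_refl _
  -- segments are shortest E-paths
  have hsegE : ∀ i ≤ j, IsShortestDPath E (fun t => w (A i + t)) (B i - A i)
      (w (A i)) (w (B i)) := by
    intro i hi
    obtain ⟨hab, hbd, hgood⟩ := hspec i hi
    have segE' := sub_shortest hwd hab hbd
    refine ⟨⟨segE'.1.1, segE'.1.2.1, fun k hk => (segE'.1.2.2 k hk).1⟩, ?_⟩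
    intro q dq hq
    obtain ⟨q0, d0, hq0⟩ := exists_shortest (E' := E) ⟨q, dq, hq⟩
    have havoid := hgood q0 d0 hq0
    have hq0' : IsDPath (E \ ↑ΔE) q0 d0 (w (A i)) (w (B i)) :=
      ⟨hq0.1.1, hq0.1.2.1, fun k hk => ⟨hq0.1.2.2 k hk, fun hmem => havoid ⟨k, hk, hmem⟩⟩⟩
    have h1 := segE'.2 q0 d0 hq0'
    have h2 := hq0.2 q dq hq
    omega
  -- cut edges
  have hcut : ∀ i, i < j → ∃ e : V × V, e ∈ ΔE ∧ Reach E (w (A i)) e.1 ∧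
      Reach E e.2 (w (B i + 1)) := by
    intro i hi
    have hblt := hBlt i hi
    have hab := (hspec i (le_of_lt hi)).1
    have hmax := nxt_max E (↑ΔE) w (d := d) (c := A i) (k := B i + 1) (by simp only [hB]; omega) (by omega)
    have hng : ¬ Good E (↑ΔE) (w (A i)) (w (B i + 1)) := fun hg => hmax ⟨by omega, hg⟩
    rw [Good] at hng
    push_neg at hng
    obtain ⟨q, dq, hq, t, htlt, htmem⟩ := hng
    refine ⟨(q t, q (t + 1)), htmem, ?_, ?_⟩
    · have hp := subpath hq.1 (Nat.zero_le t) (le_of_lt htlt)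
      rw [hq.1.1] at hp
      exact ⟨_, _, hp⟩
    · have hs := subpath hq.1 (show t + 1 ≤ dq from htlt) (le_refl dq)
      rw [hq.1.2.1] at hs
      exact ⟨_, _, hs⟩
  choose e he hre1 hre2 using hcut
  -- injectivity of the chosen edges
  have hinj : ∀ i1 i2 (h1 : i1 < j) (h2 : i2 < j), i1 < i2 → e i1 h1 ≠ e i2 h2 := by
    intro i1 i2 h1 h2 hlt heq
    have r1 : Reach E (e i1 h1).2 (w (A (i1 + 1))) := by
      rw [hstep i1]; exact hre2 i1 h1
    have r2 : Reach E (w (A (i1 + 1))) (w (A i2)) := by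
      have hle : A (i1 + 1) ≤ A i2 := hmono (i1 + 1) i2 (by omega) (by omega)
      have hd2 : A i2 ≤ d := (hAle i2 (by omega)).1
      exact ⟨_, _, subpath hwE hle hd2⟩
    have r3 : Reach E (w (A i2)) (e i2 h2).1 := hre1 i2 h2
    have r : Reach E (e i1 h1).2 (e i1 h1).1 := by
      rw [heq] at r1 ⊢; exact (r1.trans r2).trans r3
    have hE : ((e i1 h1).1, (e i1 h1).2) ∈ E := by
      rw [heq]; exact hΔ (he i2 h2)
    exact nocyc _ _ hE r
  -- j ≤ m
  have hjm : j ≤ m := by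
    rw [← hm, ← Finset.card_fin j]
    apply Finset.card_le_card_of_injOn (fun i : Fin j => e i.1 i.2)
    · intro i _
      exact he i.1 i.2
    · intro i1 _ i2 _ heq
      rcases lt_trichotomy (i1 : ℕ) (i2 : ℕ) with h | h | h
      · exact absurd heq (hinj i1 i2 i1.2 i2.2 h)
      · exact Fin.ext h
      · exact absurd heq.symm (hinj i2 i1 i2.2 i1.2 h)
  refine ⟨w, d, hwd, j, hjm, A, B, hA0, hBj, fun i hi => (hspec i hi).1,
    fun i hi => hstep i, hsegE, fun i hi => (hspec i hi).2.2⟩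
end

section
/- Let T be a finite rooted tree (of unbounded degree) with node set V and let p : V → {0,1,2} assign pebbles to nodes, with #(S,p) denoting the total number of pebbles on a set S of nodes. Suppose either (i) #(V,p) > 2, or (ii) #(V,p) = 2 and p(v) ≤ 1 for all v ∈ V. Then there is a node v ∈ V such that either: (1) #(T \ T_v, p) ≤ (2/3)·#(V,p) and #(T_v, p) ≤ (2/3)·#(V,p), or (2) #(T \ T_v, p) ≤ (1/3)·#(V,p) and #(T_u, p) ≤ (1/3)·#(V,p) for every child u of v. -/
/-- The set of nodes of the subtree rooted at `v` of the tree `G` rooted at `root`: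
those nodes whose (unique) path to the root passes through `v`. -/
def subtreeSet {V : Type*} (G : SimpleGraph V) (root v : V) : Set V :=
  {u | ∀ p : G.Walk u root, p.IsPath → v ∈ p.support}

/-- `#(S, p)`: the total number of pebbles placed by `p` on the nodes of `S`. -/
noncomputable def pebbleCount {V : Type*} [Fintype V] (p : V → ℕ) (S : Set V) : ℕ :=
  ∑ w : V, S.indicator p w


lemma pebbleCount_add_compl {V : Type*} [Fintype V] (p : V → ℕ) (S : Set V) :
    pebbleCount p Sᶜ + pebbleCount p S = pebbleCount p Set.univ := by
  classical
  unfold pebbleCount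
  rw [← Finset.sum_add_distrib]
  apply Finset.sum_congr rfl
  intro w _
  by_cases h : w ∈ S <;> simp [Set.indicator, h]

lemma self_mem_subtreeSet {V : Type*} (G : SimpleGraph V) (root v : V) :
    v ∈ subtreeSet G root v := fun q _ => q.start_mem_support

lemma subtreeSet_root {V : Type*} (G : SimpleGraph V) (root : V) :
    subtreeSet G root root = Set.univ :=
  Set.eq_univ_of_forall fun _ => fun q _ => q.end_mem_support

lemma subtreeSet_subset {V : Type*} (G : SimpleGraph V) (root u v : V)
    (hu : u ∈ subtreeSet G root v) : subtreeSet G root u ⊆ subtreeSet G root v := by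
  classical
  intro w hw P hP
  have huP : u ∈ P.support := hw P hP
  have hdrop := hP.dropUntil huP
  have hv : v ∈ (P.dropUntil u huP).support := hu _ hdrop
  exact SimpleGraph.Walk.support_dropUntil_subset P huP hv

lemma not_mem_subtree_child {V : Type*} {G : SimpleGraph V} {root u v : V}
    (hT : G.IsTree) (hne : u ≠ v) (hu : u ∈ subtreeSet G root v) :
    v ∉ subtreeSet G root u := by
  classical
  intro hv
  obtain ⟨Q⟩ := hT.isConnected.preconnected u root
  have hQ : (Q.toPath : G.Walk u root).IsPath := Q.toPath.2
  have hvQ : v ∈ (Q.toPath : G.Walk u root).support := hu _ hQ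
  set P := (Q.toPath : G.Walk u root).dropUntil v hvQ with hP
  have hPpath : P.IsPath := hQ.dropUntil hvQ
  have huP : u ∈ P.support := hv P hPpath
  have hspec := SimpleGraph.Walk.take_spec (Q.toPath : G.Walk u root) hvQ
  have hnodup := hQ.support_nodup
  rw [← hspec, SimpleGraph.Walk.support_append] at hnodup
  have hdisj := List.disjoint_of_nodup_append hnodup
  have h1 : u ∈ ((Q.toPath : G.Walk u root).takeUntil v hvQ).support :=
    SimpleGraph.Walk.start_mem_support _
  have h2 : u ∈ P.support.tail := by
    rw [SimpleGraph.Walk.support_eq_cons P] at huP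
    rcases List.mem_cons.mp huP with h | h
    · exact absurd h hne
    · exact h
  exact hdisj h1 h2

/-- Let `T` be a finite rooted tree (of unbounded degree) with node set `V`
and let `p : V → {0,1,2}` assign pebbles to nodes. If either (i) `#(V,p) > 2`, or
(ii) `#(V,p) = 2` and `p(v) ≤ 1` for all `v`, then there is a node `v` such that either
(1) `#(T \ T_v, p) ≤ (2/3)·#(V,p)` and `#(T_v, p) ≤ (2/3)·#(V,p)`, or
(2) `#(T \ T_v, p) ≤ (1/3)·#(V,p)` and `#(T_u, p) ≤ (1/3)·#(V,p)` for every child `u`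
of `v`. -/
theorem stmt7 {V : Type*} [Fintype V] (G : SimpleGraph V) (root : V) (hT : G.IsTree)
    (p : V → ℕ) (hp : ∀ v : V, p v ≤ 2)
    (hcase : 2 < pebbleCount p Set.univ ∨
      (pebbleCount p Set.univ = 2 ∧ ∀ v : V, p v ≤ 1)) :
    ∃ v : V,
      (3 * pebbleCount p (subtreeSet G root v)ᶜ ≤ 2 * pebbleCount p Set.univ ∧
       3 * pebbleCount p (subtreeSet G root v) ≤ 2 * pebbleCount p Set.univ) ∨
      (3 * pebbleCount p (subtreeSet G root v)ᶜ ≤ pebbleCount p Set.univ ∧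
       ∀ u : V, G.Adj v u → u ∈ subtreeSet G root v →
         3 * pebbleCount p (subtreeSet G root u) ≤ pebbleCount p Set.univ) := by

  classical
  set N := pebbleCount p Set.univ with hN
  have hrootN : pebbleCount p (subtreeSet G root root) = N := by
    rw [subtreeSet_root]
  obtain ⟨v, hvA, hvmin⟩ := Finset.exists_min_image
    (Finset.univ.filter (fun v => 2 * N ≤ 3 * pebbleCount p (subtreeSet G root v)))
    (fun v => (subtreeSet G root v).ncard)
    ⟨root, by simp [hrootN]; omega⟩
  have hvA' : 2 * N ≤ 3 * pebbleCount p (subtreeSet G root v) := by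
    simpa using hvA
  have hchild : ∀ u, G.Adj v u → u ∈ subtreeSet G root v →
      ¬ (2 * N ≤ 3 * pebbleCount p (subtreeSet G root u)) := by
    intro u hadj hu hA
    have hsub := subtreeSet_subset G root u v hu
    have hle := hvmin u (by simp [hA])
    have heq : subtreeSet G root u = subtreeSet G root v :=
      Set.eq_of_subset_of_ncard_le hsub hle (Set.toFinite _)
    have hvm : v ∈ subtreeSet G root u := heq ▸ self_mem_subtreeSet G root v
    exact not_mem_subtree_child hT hadj.ne' hu hvm
  by_cases hbig : ∃ u, G.Adj v u ∧ u ∈ subtreeSet G root v ∧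
      N ≤ 3 * pebbleCount p (subtreeSet G root u)
  · obtain ⟨u, hadj, hu, hNu⟩ := hbig
    have h1 := pebbleCount_add_compl p (subtreeSet G root u)
    have h2 := hchild u hadj hu
    exact ⟨u, Or.inl ⟨by omega, by omega⟩⟩
  · push_neg at hbig
    have h1 := pebbleCount_add_compl p (subtreeSet G root v)
    refine ⟨v, Or.inr ⟨by omega, ?_⟩⟩
    intro u hadj hu
    have := hbig u hadj hu
    omega
end

section
/- Let G = (V,E) be a finite simple undirected graph, let M be a maximal matching of G, let ΔE be a set of edges on V disjoint from E, and let G' = (V, E ∪ ΔE). Let U be the set of vertices that are unmatched by M and incident to some edge of ΔE, let G_I be the subgraph of G' induced by U, and let M_I be any maximal matching of G_I. Then M ∪ M_I is a maximal matching of G'. -/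
/-- `M` is a matching of `G`: a set of edges of `G` that are pairwise vertex-disjoint. -/
def IsMatchingSet {V : Type*} (G : SimpleGraph V) (M : Set (Sym2 V)) : Prop :=
  M ⊆ G.edgeSet ∧ ∀ e ∈ M, ∀ f ∈ M, e ≠ f → ∀ v : V, v ∈ e → v ∉ f

/-- The vertex `v` is matched (covered) by the edge set `M`. -/
def CoveredBy {V : Type*} (M : Set (Sym2 V)) (v : V) : Prop :=
  ∃ e ∈ M, v ∈ e

/-- `M` is a maximal matching of `G`: a matching to which no edge of `G` can be added. -/
def IsMaximalMatchingSet {V : Type*} (G : SimpleGraph V) (M : Set (Sym2 V)) : Prop :=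
  IsMatchingSet G M ∧ ∀ e ∈ G.edgeSet, e ∉ M → ¬ IsMatchingSet G (insert e M)

/-- The subgraph of `G` induced by the vertex set `U` (kept on the same vertex type). -/
def inducedOn {V : Type*} (G : SimpleGraph V) (U : Set V) : SimpleGraph V where
  Adj x y := G.Adj x y ∧ x ∈ U ∧ y ∈ U
  symm := ⟨fun x y h => ⟨h.1.symm, h.2.2, h.2.1⟩⟩
  loopless := ⟨fun x h => G.loopless.irrefl x h.1⟩

/-!
Every edge of `G'` has an endpoint covered by `M ∪ M_I`: an edge of `G` has one covered by `M`
by maximality, and an edge of `ΔE` with no endpoint covered by `M` has both endpoints in `U`,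
so it is an edge of `G_I` and has an endpoint covered by `M_I`. The union is a matching because
`M_I` only covers vertices of `U`, which `M` leaves uncovered.
-/

section Matching

variable {V : Type*} {G H : SimpleGraph V} {M N : Set (Sym2 V)}

theorem IsMatchingSet.mono (hGH : G ≤ H) (hM : IsMatchingSet G M) : IsMatchingSet H M :=
  ⟨hM.1.trans (SimpleGraph.edgeSet_mono hGH), hM.2⟩

theorem IsMatchingSet.union (hM : IsMatchingSet G M) (hN : IsMatchingSet G N)
    (hMN : ∀ v, CoveredBy M v → ¬ CoveredBy N v) : IsMatchingSet G (M ∪ N) := by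
  refine ⟨Set.union_subset hM.1 hN.1, ?_⟩
  rintro e (he | he) f (hf | hf) hef v hve hvf
  · exact hM.2 e he f hf hef v hve hvf
  · exact hMN v ⟨e, he, hve⟩ ⟨f, hf, hvf⟩
  · exact hMN v ⟨f, hf, hvf⟩ ⟨e, he, hve⟩
  · exact hN.2 e he f hf hef v hve hvf

theorem isMaximalMatchingSet_iff :
    IsMaximalMatchingSet G M ↔
      IsMatchingSet G M ∧ ∀ e ∈ G.edgeSet, ∃ v ∈ e, CoveredBy M v := by
  constructor
  · rintro ⟨hM, hmax⟩
    refine ⟨hM, fun e he => ?_⟩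
    by_cases heM : e ∈ M
    · induction e using Sym2.ind with
      | _ x y => exact ⟨x, Sym2.mem_mk_left x y, s(x, y), heM, Sym2.mem_mk_left x y⟩
    by_contra! hfree
    refine hmax e he heM ⟨Set.insert_subset he hM.1, ?_⟩
    rintro a (rfl | ha) b (rfl | hb) hab v hva hvb
    · exact hab rfl
    · exact hfree v hva ⟨b, hb, hvb⟩
    · exact hfree v hvb ⟨a, ha, hva⟩
    · exact hM.2 a ha b hb hab v hva hvb
  · rintro ⟨hM, hcov⟩
    refine ⟨hM, fun e he heM hins => ?_⟩
    obtain ⟨v, hve, f, hf, hvf⟩ := hcov e he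
    exact hins.2 e (Set.mem_insert e M) f (Set.mem_insert_of_mem e hf)
      (fun hef => heM (hef ▸ hf)) v hve hvf

theorem mem_edgeSet_inducedOn {U : Set V} {e : Sym2 V} :
    e ∈ (inducedOn G U).edgeSet ↔ e ∈ G.edgeSet ∧ ∀ v ∈ e, v ∈ U := by
  induction e using Sym2.ind with
  | _ x y => simp [inducedOn]

theorem inducedOn_le (U : Set V) : inducedOn G U ≤ G :=
  fun _ _ h => h.1

theorem IsMatchingSet.mem_of_coveredBy_inducedOn {U : Set V}
    (hN : IsMatchingSet (inducedOn G U) N) {v : V} (hv : CoveredBy N v) : v ∈ U := by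
  obtain ⟨e, he, hve⟩ := hv
  exact (mem_edgeSet_inducedOn.mp (hN.1 he)).2 v hve

end Matching

theorem stmt8_general {V : Type*} (G : SimpleGraph V) (M : Set (Sym2 V))
    (hM : IsMaximalMatchingSet G M) (ΔE : Set (Sym2 V))
    (U : Set V) (hU : U = {v | ¬ CoveredBy M v ∧ ∃ e ∈ ΔE, v ∈ e})
    (MI : Set (Sym2 V))
    (hMI : IsMaximalMatchingSet (inducedOn (G ⊔ SimpleGraph.fromEdgeSet ΔE) U) MI) :
    IsMaximalMatchingSet (G ⊔ SimpleGraph.fromEdgeSet ΔE) (M ∪ MI) := by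
  rw [isMaximalMatchingSet_iff] at hM hMI ⊢
  have hUfree : ∀ v ∈ U, ¬ CoveredBy M v := by
    rw [hU]
    exact fun v hv => hv.1
  refine ⟨(hM.1.mono le_sup_left).union (hMI.1.mono (inducedOn_le U)) fun v hvM hvMI =>
    hUfree v (hMI.1.mem_of_coveredBy_inducedOn hvMI) hvM, fun e he => ?_⟩
  by_cases hcovM : ∃ v ∈ e, CoveredBy M v
  · obtain ⟨v, hve, f, hf, hvf⟩ := hcovM
    exact ⟨v, hve, f, Or.inl hf, hvf⟩
  push Not at hcovM
  obtain heG | ⟨heΔ, -⟩ : e ∈ G.edgeSet ∪ ΔE \ Sym2.diagSet := by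
    rwa [← SimpleGraph.edgeSet_fromEdgeSet, ← SimpleGraph.edgeSet_sup]
  · obtain ⟨v, hve, hv⟩ := hM.2 e heG
    exact absurd hv (hcovM v hve)
  have heU : ∀ v ∈ e, v ∈ U := by
    rw [hU]
    exact fun v hve => ⟨hcovM v hve, e, heΔ, hve⟩
  obtain ⟨v, hve, f, hf, hvf⟩ := hMI.2 e (mem_edgeSet_inducedOn.mpr ⟨he, heU⟩)
  exact ⟨v, hve, f, Or.inr hf, hvf⟩

/-- Let `G` be a finite simple undirected graph, `M` a maximal matching of
`G`, `ΔE` a set of edges on `V` disjoint from `E(G)`, and `G' = G + ΔE`. Let `U` be the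
set of vertices unmatched by `M` and incident to some edge of `ΔE`, let `G_I` be the
subgraph of `G'` induced by `U`, and let `M_I` be any maximal matching of `G_I`.
Then `M ∪ M_I` is a maximal matching of `G'`. -/
theorem stmt8 {V : Type*} [Fintype V] (G : SimpleGraph V) (M : Set (Sym2 V))
    (hM : IsMaximalMatchingSet G M) (ΔE : Set (Sym2 V))
    (hdisj : Disjoint ΔE G.edgeSet) (hnd : ∀ e ∈ ΔE, ¬ e.IsDiag)
    (U : Set V) (hU : U = {v | ¬ CoveredBy M v ∧ ∃ e ∈ ΔE, v ∈ e})
    (MI : Set (Sym2 V))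
    (hMI : IsMaximalMatchingSet (inducedOn (G ⊔ SimpleGraph.fromEdgeSet ΔE) U) MI) :
    IsMaximalMatchingSet (G ⊔ SimpleGraph.fromEdgeSet ΔE) (M ∪ MI) :=
  stmt8_general G M hM ΔE U hU MI hMI
end
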